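/- For all α, β, γ > 0, b₀(γ,β,α)·θ_log(γ,β) + b₀(α,β,γ)·θ_log(α,β) ≥ θ_log(α,β)² + θ_log(γ,β)², where b₀(α,β,γ) := ∂₁θ_log(β,γ)·α + ∂₂θ_log(β,γ)·β. -/

import Mathlib

open Real

noncomputable def thetaLog (r s : ℝ) : ℝ := ∫ p in (0:ℝ)..1, r ^ (1 - p) * s ^ p

noncomputable def dtheta1 (r s : ℝ) : ℝ := deriv (fun u : ℝ => thetaLog u s) r

noncomputable def dtheta2 (r s : ℝ) : ℝ := deriv (fun v : ℝ => thetaLog r v) s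

noncomputable def bfun (a b c : ℝ) : ℝ := dtheta1 b c * a + dtheta2 b c * b - thetaLog a b

noncomputable def b0fun (a b c : ℝ) : ℝ := dtheta1 b c * a + dtheta2 b c * b

/-!
For fixed `p ∈ [0, 1]` the integrand `(u, v) ↦ u ^ (1 - p) * v ^ p` of `θ_log` is concave and
positively homogeneous of degree one, so it lies below its tangent plane through the origin at
any point `(b, c)`; by weighted AM–GM this reads
`a ^ (1 - p) * b ^ p ≤ (1 - p) * (c / b) ^ p * a + p * (c / b) ^ (p - 1) * b`.
Differentiating under the integral sign and integrating over `p` gives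
`θ_log(a, b) ≤ b₀(a, b, c)`; the theorem is the sum of two instances of this, each multiplied
by `θ_log ≥ 0`.
-/

open Set MeasureTheory

lemma Real.rpow_le_rpow_add_rpow_of_mem_Icc {m M x : ℝ} (hm : 0 < m) (hx : x ∈ Icc m M) (z : ℝ) :
    x ^ z ≤ m ^ z + M ^ z := by
  rcases le_total z 0 with hz | hz
  · linarith [rpow_le_rpow_of_nonpos hm hx.1 hz, rpow_nonneg (hm.trans_le (hx.1.trans hx.2)).le z]
  · linarith [rpow_le_rpow (hm.le.trans hx.1) hx.2 hz, rpow_nonneg hm.le z]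

theorem hasDerivAt_intervalIntegral_mul_rpow {k e : ℝ → ℝ} (hk : Continuous k)
    (he : Continuous e) (a b : ℝ) {x₀ : ℝ} (hx₀ : 0 < x₀) :
    HasDerivAt (fun x => ∫ t in a..b, k t * x ^ e t)
      (∫ t in a..b, k t * (e t * x₀ ^ (e t - 1))) x₀ := by
  have hm : 0 < x₀ / 2 := half_pos hx₀
  have hpos : ∀ x ∈ Icc (x₀ / 2) (2 * x₀), 0 < x := fun x hx => hm.trans_le hx.1
  refine (intervalIntegral.hasDerivAt_integral_of_dominated_loc_of_deriv_le
    (F := fun x t => k t * x ^ e t) (F' := fun x t => k t * (e t * x ^ (e t - 1)))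
    (bound := fun t => |k t| * (|e t| * ((x₀ / 2) ^ (e t - 1) + (2 * x₀) ^ (e t - 1))))
    (Icc_mem_nhds (half_lt_self hx₀) (lt_two_mul_self hx₀))
    ?meas ?int ?meas' ?bound ?bound_int ?deriv).2
  case meas =>
    filter_upwards [eventually_gt_nhds hx₀] with x hx
    exact (by fun_prop (disch := positivity) :
      Continuous fun t => k t * x ^ e t).aestronglyMeasurable
  case int =>
    exact (by fun_prop (disch := positivity) :
      Continuous fun t => k t * x₀ ^ e t).intervalIntegrable _ _
  case meas' =>
    exact (by fun_prop (disch := positivity) :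
      Continuous fun t => k t * (e t * x₀ ^ (e t - 1))).aestronglyMeasurable
  case bound =>
    refine Filter.Eventually.of_forall fun t _ x hx => ?_
    rw [norm_mul, norm_mul, norm_eq_abs, norm_eq_abs,
      norm_of_nonneg (rpow_nonneg (hpos x hx).le _)]
    gcongr
    exact rpow_le_rpow_add_rpow_of_mem_Icc hm hx _
  case bound_int =>
    exact (by fun_prop (disch := positivity) : Continuous fun t =>
      |k t| * (|e t| * ((x₀ / 2) ^ (e t - 1) + (2 * x₀) ^ (e t - 1)))).intervalIntegrable _ _
  case deriv =>
    exact Filter.Eventually.of_forall fun t _ x hx =>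
      ((hasDerivAt_rpow_const (Or.inl (hpos x hx).ne')).const_mul (k t))

lemma Real.rpow_one_sub_mul_rpow_le {u v w p : ℝ} (hu : 0 ≤ u) (hv : 0 ≤ v) (hw : 0 < w)
    (hp₀ : 0 ≤ p) (hp₁ : p ≤ 1) :
    u ^ (1 - p) * v ^ p ≤ (1 - p) * (w ^ p * u) + p * (w ^ (p - 1) * v) := by
  have hgeom : (w ^ p * u) ^ (1 - p) * (w ^ (p - 1) * v) ^ p = u ^ (1 - p) * v ^ p := by
    rw [mul_rpow (rpow_nonneg hw.le _) hu, mul_rpow (rpow_nonneg hw.le _) hv, ← rpow_mul hw.le,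
      ← rpow_mul hw.le]
    calc _ = w ^ (p * (1 - p) + (p - 1) * p) * (u ^ (1 - p) * v ^ p) := by rw [rpow_add hw]; ring
      _ = _ := by rw [show p * (1 - p) + (p - 1) * p = 0 by ring, rpow_zero, one_mul]
  rw [← hgeom]
  exact geom_mean_le_arith_mean2_weighted (by linarith) hp₀ (by positivity) (by positivity)
    (by ring)

lemma hasDerivAt_thetaLog_left {r s : ℝ} (hr : 0 < r) (hs : 0 < s) :
    HasDerivAt (fun u => thetaLog u s)
      (∫ p in (0:ℝ)..1, s ^ p * ((1 - p) * r ^ (1 - p - 1))) r := by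
  have hswap : (fun u => thetaLog u s) = fun u => ∫ p in (0:ℝ)..1, s ^ p * u ^ (1 - p) := by
    funext u
    simp only [thetaLog, mul_comm]
  rw [hswap]
  exact hasDerivAt_intervalIntegral_mul_rpow (continuous_const_rpow hs.ne') (by fun_prop) 0 1 hr

lemma hasDerivAt_thetaLog_right {r s : ℝ} (hr : 0 < r) (hs : 0 < s) :
    HasDerivAt (fun v => thetaLog r v) (∫ p in (0:ℝ)..1, r ^ (1 - p) * (p * s ^ (p - 1))) s :=
  hasDerivAt_intervalIntegral_mul_rpow (e := id) (by fun_prop (disch := positivity))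
    continuous_id 0 1 hs

lemma thetaLog_nonneg {a b : ℝ} (ha : 0 ≤ a) (hb : 0 ≤ b) : 0 ≤ thetaLog a b :=
  intervalIntegral.integral_nonneg zero_le_one fun p _ => by positivity

lemma thetaLog_le_b0fun {a b c : ℝ} (ha : 0 < a) (hb : 0 < b) (hc : 0 < c) :
    thetaLog a b ≤ b0fun a b c := by
  have hint₁ : IntervalIntegrable (fun p => c ^ p * ((1 - p) * b ^ (1 - p - 1)) * a) volume 0 1 :=
    (by fun_prop (disch := positivity) : Continuous _).intervalIntegrable _ _
  have hint₂ : IntervalIntegrable (fun p => b ^ (1 - p) * (p * c ^ (p - 1)) * b) volume 0 1 :=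
    (by fun_prop (disch := positivity) : Continuous _).intervalIntegrable _ _
  rw [b0fun, dtheta1, dtheta2, (hasDerivAt_thetaLog_left hb hc).deriv,
    (hasDerivAt_thetaLog_right hb hc).deriv, ← intervalIntegral.integral_mul_const,
    ← intervalIntegral.integral_mul_const, ← intervalIntegral.integral_add hint₁ hint₂, thetaLog]
  refine intervalIntegral.integral_mono_on zero_le_one
    ((by fun_prop (disch := positivity) : Continuous _).intervalIntegrable _ _) (hint₁.add hint₂)
    fun p hp => ?_
  calc a ^ (1 - p) * b ^ p ≤ (1 - p) * ((c / b) ^ p * a) + p * ((c / b) ^ (p - 1) * b) :=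
        rpow_one_sub_mul_rpow_le ha.le hb.le (div_pos hc hb) hp.1 hp.2
    _ = _ := by
      rw [div_rpow hc.le hb.le, div_rpow hc.le hb.le, sub_sub_cancel_left, rpow_neg hb.le,
        rpow_sub hb, rpow_sub hb, rpow_one]
      field_simp

theorem b0_theta_lower_sq (a b c : ℝ) (ha : 0 < a) (hb : 0 < b) (hc : 0 < c) :
    b0fun c b a * thetaLog c b + b0fun a b c * thetaLog a b ≥
      thetaLog a b ^ 2 + thetaLog c b ^ 2 := by
  have hcb := mul_le_mul_of_nonneg_right (thetaLog_le_b0fun hc hb ha)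
    (thetaLog_nonneg hc.le hb.le)
  have hab := mul_le_mul_of_nonneg_right (thetaLog_le_b0fun ha hb hc)
    (thetaLog_nonneg ha.le hb.le)
  rw [ge_iff_le, sq, sq]
  linarith
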